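/- arXiv:quant-ph/0506054 — 2 statements merged into one kernel-verified Lean document; each statement's English description precedes it below -/
import Mathlib

section
/- Let p be a prime, ξ, e ∈ (ZMod p)^{2n}, λ ∈ ℂ, and let φ : (ZMod p)^n → ℂ be a vector such that XZⁿ(ξ)·φ = λ·φ (matrix–vector multiplication). Then XZⁿ(ξ)·(XZⁿ(e)·φ) = λ·ω^{⟨ξ,e⟩}·(XZⁿ(e)·φ); that is, applying the error XZⁿ(e) shifts the eigenvalue of XZⁿ(ξ) by the factor ω^{⟨ξ,e⟩}. -/
open scoped BigOperators

/-- The phase space `(ZMod p)^n × (ZMod p)^n`, representing `(ZMod p)^{2n}`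
written as pairs `(a|b)`. -/
abbrev PV (p n : ℕ) := (Fin n → ZMod p) × (Fin n → ZMod p)

/-- The symplectic inner product `⟨x,y⟩ = ∑ i, (b i * c i - a i * d i)`
for `x = (a|b)`, `y = (c|d)`. -/
def symp {p n : ℕ} (x y : PV p n) : ZMod p :=
  ∑ i, (x.2 i * y.1 i - x.1 i * y.2 i)

/-- `ξ_1,…,ξ_n, η_1,…,η_n` form a hyperbolic basis of `(ZMod p)^{2n}`. -/
def IsHyperbolicBasis {p n : ℕ} (ξ η : Fin n → PV p n) : Prop :=
  LinearIndependent (ZMod p) (Sum.elim ξ η) ∧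
  Submodule.span (ZMod p) (Set.range (Sum.elim ξ η)) = ⊤ ∧
  (∀ i j, symp (ξ i) (η j) = if i = j then 1 else 0) ∧
  (∀ i j, symp (ξ i) (ξ j) = 0) ∧
  (∀ i j, symp (η i) (η j) = 0)

/-- Symplectic orthogonal complement `W^⊥` of a submodule `W`. -/
def sympOrtho {p n : ℕ} (W : Submodule (ZMod p) (PV p n)) :
    Submodule (ZMod p) (PV p n) where
  carrier := {y | ∀ x ∈ W, symp x y = 0}
  zero_mem' := by intro x hx; simp [symp]
  add_mem' := by
    intro a b ha hb x hx
    have h : symp x (a + b) = symp x a + symp x b := by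
      unfold symp
      rw [← Finset.sum_add_distrib]
      refine Finset.sum_congr rfl ?_
      intro i _
      simp only [Prod.fst_add, Prod.snd_add, Pi.add_apply]
      ring
    rw [h, ha x hx, hb x hx, add_zero]
  smul_mem' := by
    intro c a ha x hx
    have h : symp x (c • a) = c * symp x a := by
      unfold symp
      rw [Finset.mul_sum]
      refine Finset.sum_congr rfl ?_
      intro i _
      simp only [Prod.smul_fst, Prod.smul_snd, Pi.smul_apply, smul_eq_mul]
      ring
    rw [h, ha x hx, mul_zero]

/-- `ω = exp(2πi/p)`. -/
noncomputable def omg (p : ℕ) : ℂ := Complex.exp (2 * Real.pi * Complex.I / p)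

/-- The matrix `XZⁿ(v)` for `v = (a|b)`: entry `(r,c)` equals `ω^{b·c}`
if `r = c + a`, and `0` otherwise. -/
noncomputable def XZ {p n : ℕ} (v : PV p n) :
    Matrix (Fin n → ZMod p) (Fin n → ZMod p) ℂ :=
  fun r c => if r = c + v.1 then omg p ^ (∑ i, v.2 i * c i).val else 0

/-- The standard basis vector `δ_u`. -/
def delta {p n : ℕ} (u : Fin n → ZMod p) : (Fin n → ZMod p) → ℂ :=
  fun v => if v = u then 1 else 0

/-- Ordered product `∏_{i=1}^n (M i)^{u_i}` of matrices, powers via integer lifts. -/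
noncomputable def prodPow {p n : ℕ} [NeZero p]
    (M : Fin n → Matrix (Fin n → ZMod p) (Fin n → ZMod p) ℂ)
    (u : Fin n → ZMod p) : Matrix (Fin n → ZMod p) (Fin n → ZMod p) ℂ :=
  ((List.finRange n).map (fun i => (M i) ^ (u i).val)).prod

/-- Splice `e ∈ (ZMod p)^{n-k}` and `x ∈ (ZMod p)^k` into a vector of `(ZMod p)^n`,
identifying `(ZMod p)^n` with `(ZMod p)^{n-k} × (ZMod p)^k`. -/
def splice {p n k : ℕ} (hk : k ≤ n) (e : Fin (n - k) → ZMod p)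
    (x : Fin k → ZMod p) : Fin n → ZMod p :=
  fun i => Fin.append e x (Fin.cast (by omega) i)

/-- The index `n - k + i` of `Fin n`, for `i : Fin k`. -/
def lastIdx {n k : ℕ} (hk : k ≤ n) (i : Fin k) : Fin n :=
  ⟨n - k + i.1, by have := i.2; omega⟩

/-- Kronecker (tensor) product of two vectors. -/
def vecKron {ι : Type*} (f g : ι → ℂ) : ι × ι → ℂ := fun q => f q.1 * g q.2

/-- Entrywise complex conjugate of a vector. -/
def conjVec {ι : Type*} (f : ι → ℂ) : ι → ℂ := fun i => (starRingEnd ℂ) (f i)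

lemma omg_pow_p (p : ℕ) [NeZero p] : omg p ^ p = 1 := by
  unfold omg
  rw [← Complex.exp_nat_mul]
  have hp : (p : ℂ) ≠ 0 := Nat.cast_ne_zero.2 (NeZero.ne p)
  have h2 : (p : ℂ) * (2 * Real.pi * Complex.I / p) = 2 * Real.pi * Complex.I := by
    field_simp
  rw [h2]
  simpa [mul_comm, mul_assoc] using Complex.exp_two_pi_mul_I

lemma omg_pow_mod (p : ℕ) [NeZero p] (a : ℕ) : omg p ^ (a % p) = omg p ^ a := by
  conv_rhs => rw [← Nat.div_add_mod a p]
  rw [pow_add, pow_mul, omg_pow_p, one_pow, one_mul]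

lemma omg_pow_val_add {p : ℕ} [NeZero p] (x y : ZMod p) :
    omg p ^ (x + y).val = omg p ^ x.val * omg p ^ y.val := by
  rw [ZMod.val_add, omg_pow_mod, pow_add]

/-- Entry of a product of two `XZ` matrices. -/
lemma XZ_mul_apply {p n : ℕ} [NeZero p] (x y : PV p n) (r s : Fin n → ZMod p) :
    (XZ x * XZ y) r s =
      if r = s + y.1 + x.1 then
        omg p ^ ((∑ i, x.2 i * (s + y.1) i) + ∑ i, y.2 i * s i : ZMod p).val
      else 0 := by
  simp only [Matrix.mul_apply, XZ]
  have : ∀ m : Fin n → ZMod p,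
      (if r = m + x.1 then omg p ^ (∑ i, x.2 i * m i).val else 0) *
        (if m = s + y.1 then omg p ^ (∑ i, y.2 i * s i).val else 0) =
      if m = s + y.1 then
        (if r = m + x.1 then omg p ^ (∑ i, x.2 i * m i).val else 0) *
          omg p ^ (∑ i, y.2 i * s i).val
      else 0 := by
    intro m
    by_cases hm : m = s + y.1 <;> simp [hm]
  rw [Finset.sum_congr rfl (fun m _ => this m), Finset.sum_ite_eq' Finset.univ]
  simp only [Finset.mem_univ, if_pos]
  by_cases hr : r = s + y.1 + x.1
  · rw [if_pos hr, if_pos hr, omg_pow_val_add]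
  · rw [if_neg hr, if_neg hr, zero_mul]

/-- Commutation relation: `XZ ξ * XZ e = ω^{⟨ξ,e⟩} • (XZ e * XZ ξ)`. -/
lemma XZ_comm {p n : ℕ} [NeZero p] (ξ e : PV p n) :
    XZ ξ * XZ e = (omg p ^ (symp ξ e).val) • (XZ e * XZ ξ) := by
  ext r s
  rw [Matrix.smul_apply, XZ_mul_apply, XZ_mul_apply, smul_eq_mul]
  by_cases hr : r = s + e.1 + ξ.1
  · rw [if_pos hr, if_pos (by rw [hr]; ring), ← omg_pow_val_add]
    have key : ((∑ i, ξ.2 i * (s + e.1) i) + ∑ i, e.2 i * s i : ZMod p)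
        = symp ξ e + ((∑ i, e.2 i * (s + ξ.1) i) + ∑ i, ξ.2 i * s i) := by
      unfold symp
      simp only [← Finset.sum_add_distrib]
      exact Finset.sum_congr rfl fun i _ => by simp only [Pi.add_apply]; ring
    rw [key]
  · rw [if_neg hr, if_neg (fun hh => hr (by rw [hh]; ring)), mul_zero]

/-- applying the error `XZⁿ(e)` shifts the eigenvalue of `XZⁿ(ξ)`
by the factor `ω^{⟨ξ,e⟩}`. -/
theorem stmt4 (p n : ℕ) [Fact p.Prime] (ξ e : PV p n) (lam : ℂ)
    (φ : (Fin n → ZMod p) → ℂ)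
    (h : (XZ ξ).mulVec φ = lam • φ) :
    (XZ ξ).mulVec ((XZ e).mulVec φ) =
      (lam * omg p ^ (symp ξ e).val) • ((XZ e).mulVec φ) := by
  have := Fact.out (p := p.Prime)
  have : NeZero p := ⟨this.ne_zero⟩
  rw [Matrix.mulVec_mulVec, XZ_comm, Matrix.smul_mulVec,
    ← Matrix.mulVec_mulVec, h, Matrix.mulVec_smul, smul_smul, mul_comm]
end

section
/- Let p be a prime and 0 ≤ m ≤ n. The number of m-tuples (v_1,…,v_m) of vectors of (ZMod p)^{2n} that are linearly independent over ZMod p and pairwise symplectically orthogonal (⟨v_i,v_j⟩ = 0 for all i,j) equals Π_{i=0}^{m−1} (p^{2n−i} − p^i). -/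
open scoped BigOperators

/-!
An isotropic frame `(v₁, …, v_{m+1})` of an alternating form is an isotropic frame
`(v₁, …, v_m)` followed by a vector of `W^⊥ \ W`, where `W = span (v₁, …, v_m)`. Since the
form is alternating, `W ⊆ W^⊥`, and by nondegeneracy `dim W^⊥ = 2n - m`; so, whatever the
first `m` vectors are, there are exactly `p^(2n-m) - p^m` choices for `v_{m+1}`.
-/

open Module Submodule

namespace LinearMap.BilinForm

variable {K V : Type*} [Field K] [AddCommGroup V] [Module K V]

def isotropicFrames (B : LinearMap.BilinForm K V) (m : ℕ) : Set (Fin m → V) :=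
  {v | LinearIndependent K v ∧ ∀ i j, B (v i) (v j) = 0}

variable {B : LinearMap.BilinForm K V}

theorem mem_orthogonal_span_range_iff {ι : Type*} {v : ι → V} {x : V} :
    x ∈ B.orthogonal (span K (Set.range v)) ↔ ∀ i, B (v i) x = 0 := by
  refine ⟨fun h i => h _ (subset_span (Set.mem_range_self i)), fun h => ?_⟩
  have : span K (Set.range v) ≤ LinearMap.ker (B.flip x) := by
    rw [span_le]
    rintro _ ⟨i, rfl⟩
    exact h i
  exact fun y hy => this hy

theorem span_le_orthogonal_span {ι : Type*} {v : ι → V} (hv : ∀ i j, B (v i) (v j) = 0) :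
    span K (Set.range v) ≤ B.orthogonal (span K (Set.range v)) := by
  rw [span_le]
  rintro _ ⟨i, rfl⟩
  exact mem_orthogonal_span_range_iff.2 fun j => hv j i

theorem snoc_mem_isotropicFrames_iff (hB : B.IsAlt) {m : ℕ} {v : Fin m → V} {x : V} :
    Fin.snoc v x ∈ B.isotropicFrames (m + 1) ↔
      v ∈ B.isotropicFrames m ∧
        x ∈ (B.orthogonal (span K (Set.range v)) : Set V) \ span K (Set.range v) := by
  have hiso : (∀ i j, B ((Fin.snoc v x : Fin (m + 1) → V) i)
        ((Fin.snoc v x : Fin (m + 1) → V) j) = 0) ↔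
      (∀ i j, B (v i) (v j) = 0) ∧ ∀ i, B (v i) x = 0 := by
    refine ⟨fun h => ⟨fun i j => by simpa using h i.castSucc j.castSucc,
      fun i => by simpa using h i.castSucc (Fin.last m)⟩, fun ⟨hv, hx⟩ i j => ?_⟩
    induction i using Fin.lastCases <;> induction j using Fin.lastCases <;>
      simp only [Fin.snoc_last, Fin.snoc_castSucc]
    · exact hB x
    · exact hB.isRefl _ _ (hx _)
    · exact hx _
    · exact hv _ _
  simp only [isotropicFrames, Set.mem_ofPred_eq, linearIndependent_finSnoc, hiso, Set.mem_sdiff,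
    SetLike.mem_coe, mem_orthogonal_span_range_iff]
  tauto

def isotropicFramesSuccEquiv (hB : B.IsAlt) (m : ℕ) :
    B.isotropicFrames (m + 1) ≃ Σ v : B.isotropicFrames m,
      ↥((B.orthogonal (span K (Set.range v.1)) : Set V) \ span K (Set.range v.1)) where
  toFun v :=
    have h := (snoc_mem_isotropicFrames_iff hB).1 ((Fin.snoc_init_self v.1).symm ▸ v.2)
    ⟨⟨Fin.init v.1, h.1⟩, ⟨v.1 (Fin.last m), h.2⟩⟩
  invFun w := ⟨Fin.snoc w.1.1 w.2.1, (snoc_mem_isotropicFrames_iff hB).2 ⟨w.1.2, w.2.2⟩⟩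
  left_inv v := Subtype.ext (Fin.snoc_init_self v.1)
  right_inv _ := Sigma.subtype_ext (Subtype.ext (Fin.init_snoc (α := fun _ => V) _ _))
    (Fin.snoc_last (α := fun _ => V) _ _)

variable [Finite K] [FiniteDimensional K V]

theorem natCard_diff_of_le {W O : Submodule K V} (h : W ≤ O) :
    Nat.card ↥((O : Set V) \ W) = Nat.card K ^ finrank K O - Nat.card K ^ finrank K W := by
  have : Finite V := Module.finite_of_finite K
  rw [Nat.card_coe_set_eq, Set.ncard_sdiff h, ← Nat.card_coe_set_eq, ← Nat.card_coe_set_eq]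
  exact congrArg₂ _ (natCard_eq_pow_finrank (V := O)) (natCard_eq_pow_finrank (V := W))

theorem natCard_orthogonal_diff_span (hnd : B.Nondegenerate) {m : ℕ}
    {v : Fin m → V} (hv : v ∈ B.isotropicFrames m) :
    Nat.card ↥((B.orthogonal (span K (Set.range v)) : Set V) \ span K (Set.range v)) =
      Nat.card K ^ (finrank K V - m) - Nat.card K ^ m := by
  rw [natCard_diff_of_le (span_le_orthogonal_span hv.2), finrank_orthogonal hnd,
    finrank_span_eq_card hv.1, Fintype.card_fin]

theorem natCard_isotropicFrames (hB : B.IsAlt) (hnd : B.Nondegenerate) (m : ℕ) :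
    Nat.card (B.isotropicFrames m) =
      ∏ i ∈ Finset.range m, (Nat.card K ^ (finrank K V - i) - Nat.card K ^ i) := by
  induction m with
  | zero =>
    exact Nat.card_eq_one_iff_unique.2 ⟨⟨fun v w => Subtype.ext (Subsingleton.elim _ _)⟩,
      ⟨⟨Fin.elim0, linearIndependent_empty_type, fun i => Fin.elim0 i⟩⟩⟩
  | succ m ih =>
    have : Finite V := Module.finite_of_finite K
    have : Fintype (B.isotropicFrames m) := Fintype.ofFinite _
    rw [Nat.card_congr (isotropicFramesSuccEquiv hB m), Nat.card_sigma,
      Finset.sum_congr rfl fun v _ => natCard_orthogonal_diff_span hnd v.2,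
      Finset.sum_const, Finset.card_univ, ← Nat.card_eq_fintype_card, ih,
      Finset.prod_range_succ, smul_eq_mul]

end LinearMap.BilinForm

def sympForm (p n : ℕ) : LinearMap.BilinForm (ZMod p) (PV p n) := by
  refine LinearMap.mk₂ (ZMod p) symp ?_ ?_ ?_ ?_ <;> intros <;>
    simp only [symp, Prod.fst_add, Prod.snd_add, Prod.smul_fst, Prod.smul_snd, Pi.add_apply,
      Pi.smul_apply, smul_eq_mul, Finset.mul_sum, ← Finset.sum_add_distrib] <;>
    exact Finset.sum_congr rfl fun _ _ => by ring

theorem sympForm_apply {p n : ℕ} (x y : PV p n) : sympForm p n x y = symp x y := rfl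

theorem sympForm_isAlt (p n : ℕ) : (sympForm p n).IsAlt := fun x =>
  (sympForm_apply x x).trans (Finset.sum_eq_zero fun _ _ => sub_eq_zero.2 (mul_comm _ _))

theorem sympForm_nondegenerate (p n : ℕ) [Fact p.Prime] : (sympForm p n).Nondegenerate := by
  refine .ofSeparatingLeft fun x hx => Prod.ext (funext fun j => ?_) (funext fun j => ?_)
  · simpa [sympForm_apply, symp, Pi.single_apply] using hx (0, Pi.single j 1)
  · simpa [sympForm_apply, symp, Pi.single_apply] using hx (Pi.single j 1, 0)

theorem finrank_PV (p n : ℕ) [Fact p.Prime] : finrank (ZMod p) (PV p n) = 2 * n := by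
  simp [two_mul]

theorem stmt16_general (p n m : ℕ) [Fact p.Prime] :
    Nat.card {v : Fin m → PV p n //
      LinearIndependent (ZMod p) v ∧ ∀ i j, symp (v i) (v j) = 0} =
    ∏ i ∈ Finset.range m, (p ^ (2 * n - i) - p ^ i) := by
  have h := (sympForm p n).natCard_isotropicFrames (sympForm_isAlt p n)
    (sympForm_nondegenerate p n) m
  rwa [Nat.card_zmod, finrank_PV] at h

/-- the number of `m`-tuples of linearly independent, pairwise
symplectically orthogonal vectors of `(ZMod p)^{2n}` is
`∏_{i=0}^{m-1} (p^{2n-i} - p^i)`. -/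
theorem stmt16 (p n m : ℕ) [Fact p.Prime] (hm : m ≤ n) :
    Nat.card {v : Fin m → PV p n //
      LinearIndependent (ZMod p) v ∧ ∀ i j, symp (v i) (v j) = 0} =
    ∏ i ∈ Finset.range m, (p ^ (2 * n - i) - p ^ i) :=
  stmt16_general p n m
end
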